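/- Assume T is power compact. Then for every real λ > 0, every family of pairwise non-a.e.-equal T-atoms A with ρ(A) ≥ λ is finite. -/

import Mathlib

open MeasureTheory ENNReal Filter Set

noncomputable section

namespace PaperAtoms

variable {Ω : Type*} [MeasurableSpace Ω] {μ : MeasureTheory.Measure Ω} {p : ℝ≥0∞} [Fact (1 ≤ p)]

/-- `T` is a positive operator on `Lp`. -/
def IsPositiveOp (T : Lp ℝ p μ →L[ℝ] Lp ℝ p μ) : Prop :=
  ∀ f : Lp ℝ p μ, 0 ≤ f → 0 ≤ T f

/-- A measurable set `A` is `T`-invariant if `T f` vanishes a.e. on `Aᶜ` for every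
nonnegative `f ∈ Lp` vanishing a.e. on `Aᶜ`. -/
def Invariant (T : Lp ℝ p μ →L[ℝ] Lp ℝ p μ) (A : Set Ω) : Prop :=
  MeasurableSet A ∧
    ∀ f : Lp ℝ p μ, 0 ≤ f → (∀ᵐ x ∂μ, x ∉ A → f x = 0) → ∀ᵐ x ∂μ, x ∉ A → T f x = 0

/-- `A` is `T`-co-invariant if `Aᶜ` is `T`-invariant. -/
def CoInvariant (T : Lp ℝ p μ →L[ℝ] Lp ℝ p μ) (A : Set Ω) : Prop :=
  Invariant T Aᶜ

/-- `A` is `T`-admissible if it belongs to the σ-field generated by the `T`-invariant sets. -/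
def Admissible (T : Lp ℝ p μ →L[ℝ] Lp ℝ p μ) (A : Set Ω) : Prop :=
  MeasurableSet[MeasurableSpace.generateFrom {B : Set Ω | Invariant T B}] A

/-- A `T`-atom is a minimal `T`-admissible set with positive measure. -/
def Atom (T : Lp ℝ p μ →L[ℝ] Lp ℝ p μ) (A : Set Ω) : Prop :=
  Admissible T A ∧ 0 < μ A ∧
    ∀ B : Set Ω, Admissible T B → B ≤ᵐ[μ] A → μ B = 0 ∨ B =ᵐ[μ] A

/-- `FA` is (a version of) the future of `A`: the minimal `T`-invariant set containing `A` a.e. -/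
def IsFuture (T : Lp ℝ p μ →L[ℝ] Lp ℝ p μ) (A FA : Set Ω) : Prop :=
  Invariant T FA ∧ A ≤ᵐ[μ] FA ∧
    ∀ B : Set Ω, Invariant T B → A ≤ᵐ[μ] B → FA ≤ᵐ[μ] B

/-- `PA` is (a version of) the past of `A`: the minimal `T`-co-invariant set containing `A` a.e. -/
def IsPast (T : Lp ℝ p μ →L[ℝ] Lp ℝ p μ) (A PA : Set Ω) : Prop :=
  CoInvariant T PA ∧ A ≤ᵐ[μ] PA ∧
    ∀ B : Set Ω, CoInvariant T B → A ≤ᵐ[μ] B → PA ≤ᵐ[μ] B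

/-- `A` is `T`-convex if `A = F(A) ∩ P(A)` a.e. -/
def Convexe (T : Lp ℝ p μ →L[ℝ] Lp ℝ p μ) (A : Set Ω) : Prop :=
  MeasurableSet A ∧
    ∃ FA PA : Set Ω, IsFuture T A FA ∧ IsPast T A PA ∧ A =ᵐ[μ] (FA ∩ PA : Set Ω)

/-- Multiplication by the indicator function of `A`, as a bounded operator on `Lp`
(defined as `0` if `A` is not measurable). -/
def indicatorCLM (μ : MeasureTheory.Measure Ω) (p : ℝ≥0∞) [Fact (1 ≤ p)] (A : Set Ω) :
    Lp ℝ p μ →L[ℝ] Lp ℝ p μ := by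
  classical
  exact if hA : MeasurableSet A then
    LinearMap.mkContinuous
      { toFun := fun f => ((Lp.memLp f).indicator hA).toLp (A.indicator f)
        map_add' := fun f g => by
          rw [← MemLp.toLp_add]
          refine MemLp.toLp_congr _ _ ?_
          filter_upwards [Lp.coeFn_add f g] with x hx
          simp only [Pi.add_apply, Set.indicator_apply, hx]
          split <;> simp
        map_smul' := fun c f => by
          rw [RingHom.id_apply, ← MemLp.toLp_const_smul]
          refine MemLp.toLp_congr _ _ ?_
          filter_upwards [Lp.coeFn_smul c f] with x hx
          simp only [Pi.smul_apply, Set.indicator_apply, hx, smul_eq_mul]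
          split <;> simp }
      1
      (fun f => by
        simp only [LinearMap.coe_mk, AddHom.coe_mk, one_mul]
        rw [Lp.norm_toLp, Lp.norm_def]
        exact ENNReal.toReal_mono (Lp.eLpNorm_ne_top f) (eLpNorm_indicator_le _))
  else 0

/-- The restriction `T_A = 1_A T 1_A` of `T` to a measurable set `A`. -/
def restrictOp (T : Lp ℝ p μ →L[ℝ] Lp ℝ p μ) (A : Set Ω) : Lp ℝ p μ →L[ℝ] Lp ℝ p μ :=
  (indicatorCLM μ p A).comp (T.comp (indicatorCLM μ p A))

/-- The spectral radius of a bounded operator, via Gelfand's formula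
`ρ(T) = inf_n ‖Tⁿ‖^(1/n) = lim_n ‖Tⁿ‖^(1/n)`. -/
def specRadius (T : Lp ℝ p μ →L[ℝ] Lp ℝ p μ) : ℝ :=
  ⨅ n : ℕ, ‖T ^ (n + 1)‖ ^ (((n : ℝ) + 1)⁻¹)

/-- The spectral radius `ρ(A)` of the restriction of `T` to `A`. -/
def rhoSet (T : Lp ℝ p μ →L[ℝ] Lp ℝ p μ) (A : Set Ω) : ℝ :=
  specRadius (restrictOp T A)

/-- A measurable set `A` with `μ A > 0` is `T`-irreducible if the restriction of `T` to `A`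
is irreducible, i.e. every `T_A`-invariant subset of `A` is a.e. trivial. -/
def Irreducible (T : Lp ℝ p μ →L[ℝ] Lp ℝ p μ) (A : Set Ω) : Prop :=
  MeasurableSet A ∧ 0 < μ A ∧
    ∀ B : Set Ω, Invariant (restrictOp T A) B → B ≤ᵐ[μ] A → μ B = 0 ∨ B =ᵐ[μ] A

/-- `T` is power compact if some power `T^k`, `k ≥ 1`, is a compact operator. -/
def PowerCompact (T : Lp ℝ p μ →L[ℝ] Lp ℝ p μ) : Prop :=
  ∃ k : ℕ, 1 ≤ k ∧ IsCompactOperator (⇑(T ^ k))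

/-- `B ≼ A` for atoms: `B ⊆ F(A)` a.e. -/
def Prec (T : Lp ℝ p μ →L[ℝ] Lp ℝ p μ) (B A : Set Ω) : Prop :=
  ∃ FA : Set Ω, IsFuture T A FA ∧ B ≤ᵐ[μ] FA

/-- `B ≺ A` for atoms: `B ⊆ F(A)` a.e. and `B ≠ A` a.e. -/
def PrecStrict (T : Lp ℝ p μ →L[ℝ] Lp ℝ p μ) (B A : Set Ω) : Prop :=
  Prec T B A ∧ ¬ (B =ᵐ[μ] A)

/-- A critical atom: a `T`-atom whose spectral radius equals that of `T`. -/
def CriticalAtom (T : Lp ℝ p μ →L[ℝ] Lp ℝ p μ) (A : Set Ω) : Prop :=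
  Atom T A ∧ rhoSet T A = specRadius T

/-- There is a chain `A = A_0 ≻ A_1 ≻ ⋯ ≻ A_n` of critical atoms starting at `A`. -/
def ChainFrom (T : Lp ℝ p μ →L[ℝ] Lp ℝ p μ) (A : Set Ω) (n : ℕ) : Prop :=
  ∃ c : ℕ → Set Ω, c 0 = A ∧ (∀ i ≤ n, CriticalAtom T (c i)) ∧
    ∀ i < n, PrecStrict T (c (i + 1)) (c i)

/-- The generalized eigenspace `⋃ₖ ker (T - λ id)^k` of `T` at `λ`. -/
def genEigenspace (T : Lp ℝ p μ →L[ℝ] Lp ℝ p μ) (l : ℝ) : Submodule ℝ (Lp ℝ p μ) :=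
  ⨆ k : ℕ, LinearMap.ker (((T - l • (1 : Lp ℝ p μ →L[ℝ] Lp ℝ p μ)) ^ k : Lp ℝ p μ →L[ℝ] Lp ℝ p μ) :
    Lp ℝ p μ →ₗ[ℝ] Lp ℝ p μ)

/-- The algebraic multiplicity of `λ` for `T`. -/
def algMult (T : Lp ℝ p μ →L[ℝ] Lp ℝ p μ) (l : ℝ) : ℕ :=
  Module.finrank ℝ ↥(genEigenspace T l)

/-- The set of `k` at which the kernels of `(T - ρ(T) id)^k` stabilize; the ascent of `T`
at `ρ(T)` is its infimum. -/
def ascentSet (T : Lp ℝ p μ →L[ℝ] Lp ℝ p μ) : Set ℕ :=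
  {k : ℕ | LinearMap.ker (((T - specRadius T • (1 : Lp ℝ p μ →L[ℝ] Lp ℝ p μ)) ^ k :
        Lp ℝ p μ →L[ℝ] Lp ℝ p μ) : Lp ℝ p μ →ₗ[ℝ] Lp ℝ p μ)
      = LinearMap.ker (((T - specRadius T • (1 : Lp ℝ p μ →L[ℝ] Lp ℝ p μ)) ^ (k + 1) :
        Lp ℝ p μ →L[ℝ] Lp ℝ p μ) : Lp ℝ p μ →ₗ[ℝ] Lp ℝ p μ)}

/-- `D` is (a version of) the set `T(C)`, i.e. the support of `T(1_C f)` for any a.e.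
positive `f ∈ Lp`. -/
def IsImage (T : Lp ℝ p μ →L[ℝ] Lp ℝ p μ) (C D : Set Ω) : Prop :=
  MeasurableSet C ∧ MeasurableSet D ∧
    ∀ f : Lp ℝ p μ, (∀ᵐ x ∂μ, 0 < f x) →
      D =ᵐ[μ] ({x | T (indicatorCLM μ p C f) x ≠ 0} : Set Ω)

/-- `D` is (a version of) the `k`-fold iterated image `T^k(C)`. -/
def IsIterImage (T : Lp ℝ p μ →L[ℝ] Lp ℝ p μ) : ℕ → Set Ω → Set Ω → Prop
  | 0, C, D => D = C
  | (k + 1), C, D => ∃ E : Set Ω, IsIterImage T k C E ∧ IsImage T E D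

/-!
Infinitely many a.e.-distinct atoms are pairwise a.e.-disjoint. If each had `ρ(Aᵢ) ≥ λ`, Gelfand's
formula gives `‖T_{Aᵢ}ᵏ‖ ≥ λᵏ`, and positivity (`|T_Aᵏ u| ≤ 1_A Tᵏ |u|`) turns this into vectors
`fᵢ` in the unit ball with `‖1_{Aᵢ} Tᵏ fᵢ‖ > λᵏ / 2`. But `Tᵏ` is compact, so a subsequence of
`Tᵏ fᵢ` converges to a single `h`, and for `p < ∞` the `Lᵖ` mass of `h` on pairwise disjoint sets
tends to zero.
-/

open Topology Function

theorem tendsto_eLpNorm_indicator_of_pairwise_aedisjoint {E : Type*} [NormedAddCommGroup E]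
    {ν : Measure Ω} {q : ℝ≥0∞} (hq0 : q ≠ 0) (hq : q ≠ ∞) {f : Ω → E}
    (hf : eLpNorm f q ν ≠ ∞) {s : ℕ → Set Ω} (hs : ∀ i, MeasurableSet (s i))
    (hd : Pairwise (AEDisjoint ν on s)) :
    Tendsto (fun i => eLpNorm ((s i).indicator f) q ν) atTop (𝓝 0) := by
  have hq_pos : 0 < q.toReal := ENNReal.toReal_pos hq0 hq
  have hpiece : ∀ i, eLpNorm ((s i).indicator f) q ν
      = (∫⁻ x in s i, ‖f x‖ₑ ^ q.toReal ∂ν) ^ (1 / q.toReal) := fun i => by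
    rw [eLpNorm_indicator_eq_eLpNorm_restrict (hs i),
      eLpNorm_eq_lintegral_rpow_enorm_toReal hq0 hq]
  have hsum : ∑' i, ∫⁻ x in s i, ‖f x‖ₑ ^ q.toReal ∂ν ≠ ∞ := by
    rw [← lintegral_iUnion₀ (fun i => (hs i).nullMeasurableSet) hd]
    refine ne_top_of_le_ne_top ?_ (setLIntegral_le_lintegral _ _)
    exact ((eLpNorm_lt_top_iff_lintegral_rpow_enorm_lt_top hq0 hq).1 hf.lt_top).ne
  have hroot := (ENNReal.continuous_rpow_const (y := 1 / q.toReal)).tendsto 0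
  rw [ENNReal.zero_rpow_of_pos (one_div_pos.2 hq_pos)] at hroot
  simp_rw [hpiece]
  exact hroot.comp (ENNReal.tendsto_atTop_zero_of_tsum_ne_top hsum)

theorem indicatorCLM_coeFn {A : Set Ω} (hA : MeasurableSet A) (f : Lp ℝ p μ) :
    ⇑(indicatorCLM μ p A f) =ᵐ[μ] A.indicator ⇑f := by
  rw [indicatorCLM, dif_pos hA, LinearMap.mkContinuous_apply]
  simp only [LinearMap.coe_mk, AddHom.coe_mk]
  exact MemLp.coeFn_toLp _

theorem isPositiveOp_indicatorCLM {A : Set Ω} (hA : MeasurableSet A) :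
    IsPositiveOp (indicatorCLM μ p A) := fun f hf => by
  rw [← Lp.coeFn_nonneg] at hf ⊢
  filter_upwards [indicatorCLM_coeFn hA f, hf] with x hx hx0
  rw [hx]
  exact Set.indicator_apply_nonneg fun _ => hx0

theorem indicatorCLM_le_self {A : Set Ω} (hA : MeasurableSet A) {f : Lp ℝ p μ} (hf : 0 ≤ f) :
    indicatorCLM μ p A f ≤ f := by
  rw [← Lp.coeFn_nonneg] at hf
  rw [← Lp.coeFn_le]
  filter_upwards [indicatorCLM_coeFn hA f, hf] with x hx hx0
  rw [hx]
  exact Set.indicator_apply_le' (fun _ => le_rfl) fun _ => hx0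

theorem indicatorCLM_idem {A : Set Ω} (hA : MeasurableSet A) (f : Lp ℝ p μ) :
    indicatorCLM μ p A (indicatorCLM μ p A f) = indicatorCLM μ p A f := by
  apply Lp.ext
  filter_upwards [indicatorCLM_coeFn hA (indicatorCLM μ p A f), indicatorCLM_coeFn hA f]
    with x hx hx'
  rw [hx]
  by_cases hxA : x ∈ A <;> simp [hxA, hx']

theorem norm_indicatorCLM_le {A : Set Ω} (hA : MeasurableSet A) (f : Lp ℝ p μ) :
    ‖indicatorCLM μ p A f‖ ≤ ‖f‖ := by
  rw [Lp.norm_def, Lp.norm_def, eLpNorm_congr_ae (indicatorCLM_coeFn hA f)]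
  exact ENNReal.toReal_mono (Lp.eLpNorm_ne_top f) (eLpNorm_indicator_le _)

theorem tendsto_norm_indicatorCLM_of_pairwise_aedisjoint (hp : p ≠ ∞) (h : Lp ℝ p μ)
    {A : ℕ → Set Ω} (hA : ∀ i, MeasurableSet (A i)) (hd : Pairwise (AEDisjoint μ on A)) :
    Tendsto (fun i => ‖indicatorCLM μ p (A i) h‖) atTop (𝓝 0) := by
  have hp0 : p ≠ 0 := (zero_lt_one.trans_le (Fact.out : 1 ≤ p)).ne'
  have h0 := tendsto_eLpNorm_indicator_of_pairwise_aedisjoint hp0 hp (Lp.eLpNorm_ne_top h) hA hd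
  simp_rw [Lp.norm_def, eLpNorm_congr_ae (indicatorCLM_coeFn (hA _) h)]
  exact (ENNReal.tendsto_toReal_zero_iff fun i =>
    (eLpNorm_indicator_le _).trans_lt (Lp.eLpNorm_lt_top h) |>.ne).2 h0

theorem tendsto_norm_indicatorCLM_apply_of_isCompactOperator (hp : p ≠ ∞)
    {K : Lp ℝ p μ →L[ℝ] Lp ℝ p μ} (hK : IsCompactOperator K) {f : ℕ → Lp ℝ p μ} {C : ℝ}
    (hf : ∀ i, ‖f i‖ ≤ C) {A : ℕ → Set Ω} (hA : ∀ i, MeasurableSet (A i))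
    (hd : Pairwise (AEDisjoint μ on A)) :
    Tendsto (fun i => ‖indicatorCLM μ p (A i) (K (f i))‖) atTop (𝓝 0) := by
  refine tendsto_of_subseq_tendsto fun ns hns => ?_
  obtain ⟨L, hL, hKL⟩ :=
    IsCompactOperator.image_closedBall_subset_compact (f := K.toLinearMap) hK C
  obtain ⟨h, -, φ, hφ, hlim⟩ := hL.tendsto_subseq (x := fun n => K (f (ns n)))
    fun n => hKL ⟨f (ns n), mem_closedBall_zero_iff.2 (hf _), rfl⟩
  have hbound : ∀ n, ‖indicatorCLM μ p (A (ns (φ n))) (K (f (ns (φ n))))‖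
      ≤ ‖K (f (ns (φ n))) - h‖ + ‖indicatorCLM μ p (A (ns (φ n))) h‖ := fun n =>
    calc _ = ‖indicatorCLM μ p (A (ns (φ n))) (K (f (ns (φ n))) - h)
            + indicatorCLM μ p (A (ns (φ n))) h‖ := by rw [← map_add, sub_add_cancel]
      _ ≤ _ := (norm_add_le _ _).trans (add_le_add (norm_indicatorCLM_le (hA _) _) le_rfl)
  refine ⟨φ, squeeze_zero (fun _ => norm_nonneg _) hbound ?_⟩
  simpa using (tendsto_iff_norm_sub_tendsto_zero.1 hlim).add
    ((tendsto_norm_indicatorCLM_of_pairwise_aedisjoint hp h hA hd).comp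
      (hns.comp hφ.tendsto_atTop))

theorem IsPositiveOp.mono {T : Lp ℝ p μ →L[ℝ] Lp ℝ p μ} (hT : IsPositiveOp T)
    {f g : Lp ℝ p μ} (h : f ≤ g) : T f ≤ T g := by
  simpa using hT (g - f) (sub_nonneg.2 h)

theorem IsPositiveOp.pow {T : Lp ℝ p μ →L[ℝ] Lp ℝ p μ} (hT : IsPositiveOp T) (k : ℕ) :
    IsPositiveOp (T ^ k) := by
  induction k with
  | zero => exact fun f hf => hf
  | succ k ih => exact fun f hf => ih _ (hT f hf)

theorem IsPositiveOp.abs_apply_le {T : Lp ℝ p μ →L[ℝ] Lp ℝ p μ} (hT : IsPositiveOp T)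
    (f : Lp ℝ p μ) : |T f| ≤ T |f| :=
  abs_le'.2 ⟨hT.mono (le_abs_self f), by simpa using hT.mono (neg_le_abs f)⟩

theorem IsPositiveOp.pow_apply_le_pow_apply {S T : Lp ℝ p μ →L[ℝ] Lp ℝ p μ}
    (hS : IsPositiveOp S) (hT : IsPositiveOp T) (hST : ∀ f, 0 ≤ f → S f ≤ T f) (k : ℕ)
    {f : Lp ℝ p μ} (hf : 0 ≤ f) : (S ^ k) f ≤ (T ^ k) f := by
  induction k with
  | zero => exact le_rfl
  | succ k ih =>
    rw [pow_succ', pow_succ']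
    exact (hS.mono ih).trans (hST _ (hT.pow k f hf))

theorem isPositiveOp_restrictOp {T : Lp ℝ p μ →L[ℝ] Lp ℝ p μ} (hT : IsPositiveOp T)
    {A : Set Ω} (hA : MeasurableSet A) : IsPositiveOp (restrictOp T A) := fun f hf =>
  isPositiveOp_indicatorCLM hA _ (hT _ (isPositiveOp_indicatorCLM hA f hf))

theorem restrictOp_apply_le {T : Lp ℝ p μ →L[ℝ] Lp ℝ p μ} (hT : IsPositiveOp T)
    {A : Set Ω} (hA : MeasurableSet A) {f : Lp ℝ p μ} (hf : 0 ≤ f) :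
    restrictOp T A f ≤ T f :=
  (indicatorCLM_le_self hA (hT _ (isPositiveOp_indicatorCLM hA f hf))).trans
    (hT.mono (indicatorCLM_le_self hA hf))

theorem abs_restrictOp_pow_apply_le {T : Lp ℝ p μ →L[ℝ] Lp ℝ p μ} (hT : IsPositiveOp T)
    {A : Set Ω} (hA : MeasurableSet A) {k : ℕ} (hk : k ≠ 0) (f : Lp ℝ p μ) :
    |(restrictOp T A ^ k) f| ≤ indicatorCLM μ p A ((T ^ k) |f|) := by
  obtain ⟨k, rfl⟩ := Nat.exists_eq_succ_of_ne_zero hk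
  have hTA := isPositiveOp_restrictOp hT hA
  calc |(restrictOp T A ^ (k + 1)) f|
        ≤ (restrictOp T A ^ (k + 1)) |f| := (hTA.pow _).abs_apply_le f
    _ = indicatorCLM μ p A ((restrictOp T A ^ (k + 1)) |f|) := by
        rw [pow_succ', mul_apply_eq_comp, restrictOp,
          ContinuousLinearMap.comp_apply, indicatorCLM_idem hA]
    _ ≤ indicatorCLM μ p A ((T ^ (k + 1)) |f|) := (isPositiveOp_indicatorCLM hA).mono
        (hTA.pow_apply_le_pow_apply hT (fun _ => restrictOp_apply_le hT hA) _ (abs_nonneg f))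

theorem exists_norm_indicatorCLM_pow_apply_gt {T : Lp ℝ p μ →L[ℝ] Lp ℝ p μ}
    (hT : IsPositiveOp T) {A : Set Ω} (hA : MeasurableSet A) {k : ℕ} (hk : k ≠ 0) {c : ℝ}
    (hc : c < ‖restrictOp T A ^ k‖) :
    ∃ f : Lp ℝ p μ, ‖f‖ ≤ 1 ∧ c < ‖indicatorCLM μ p A ((T ^ k) f)‖ := by
  obtain ⟨u, hu, hcu⟩ := ContinuousLinearMap.exists_lt_apply_of_lt_opNorm _ hc
  have hnonneg := isPositiveOp_indicatorCLM hA _ (hT.pow k _ (abs_nonneg u))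
  refine ⟨|u|, (norm_abs_eq_norm u).trans_le hu.le, hcu.trans_le (norm_le_norm_of_abs_le_abs ?_)⟩
  exact (abs_restrictOp_pow_apply_le hT hA hk u).trans_eq (abs_of_nonneg hnonneg).symm

theorem pow_le_norm_pow_of_le_specRadius {S : Lp ℝ p μ →L[ℝ] Lp ℝ p μ} {l : ℝ} (hl : 0 ≤ l)
    (h : l ≤ specRadius S) {k : ℕ} (hk : k ≠ 0) : l ^ k ≤ ‖S ^ k‖ := by
  obtain ⟨k, rfl⟩ := Nat.exists_eq_succ_of_ne_zero hk
  have hbdd : BddBelow (Set.range fun n : ℕ => ‖S ^ (n + 1)‖ ^ (((n : ℝ) + 1)⁻¹)) :=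
    ⟨0, by rintro _ ⟨n, rfl⟩; positivity⟩
  have hroot : l ≤ ‖S ^ (k + 1)‖ ^ (((k : ℝ) + 1)⁻¹) := h.trans (ciInf_le hbdd k)
  calc l ^ (k + 1) ≤ (‖S ^ (k + 1)‖ ^ (((k : ℝ) + 1)⁻¹)) ^ (k + 1) := by gcongr
    _ = ‖S ^ (k + 1)‖ := by
        rw [← Real.rpow_natCast, ← Real.rpow_mul (norm_nonneg _)]
        push_cast
        rw [inv_mul_cancel₀ (by positivity), Real.rpow_one]

theorem Admissible.measurableSet {T : Lp ℝ p μ →L[ℝ] Lp ℝ p μ} {A : Set Ω}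
    (hA : Admissible T A) : MeasurableSet A :=
  MeasurableSpace.generateFrom_le (fun _ hs => hs.1) _ hA

theorem Atom.aedisjoint {T : Lp ℝ p μ →L[ℝ] Lp ℝ p μ} {A B : Set Ω}
    (hA : Atom T A) (hB : Atom T B) (hne : ¬ A =ᵐ[μ] B) : AEDisjoint μ A B := by
  have hAB : Admissible T (A ∩ B) := hA.1.inter hB.1
  rcases hA.2.2 _ hAB (Eventually.of_forall fun _ hx => hx.1) with h | hA'
  · exact h
  rcases hB.2.2 _ hAB (Eventually.of_forall fun _ hx => hx.2) with h | hB'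
  · exact h
  exact absurd (hA'.symm.trans hB') hne

variable {Ω : Type*} [MeasurableSpace Ω] {μ : MeasureTheory.Measure Ω} {p : ℝ≥0∞}

theorem statement19_general [Fact (1 ≤ p)] (hp' : p ≠ ∞)
    (T : Lp ℝ p μ →L[ℝ] Lp ℝ p μ) (hT : IsPositiveOp T) (hpc : PowerCompact T)
    (l : ℝ) (hl : 0 < l) (R : Set (Set Ω))
    (hR : ∀ A ∈ R, Atom T A ∧ l ≤ rhoSet T A)
    (hdist : ∀ A ∈ R, ∀ B ∈ R, A ≠ B → ¬ (A =ᵐ[μ] B)) :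
    R.Finite := by
  by_contra hinf
  obtain ⟨k, hk, hcomp⟩ := hpc
  let e := Set.Infinite.natEmbedding R hinf
  set A : ℕ → Set Ω := fun i => e i
  have hAtom : ∀ i, Atom T (A i) := fun i => (hR _ (e i).2).1
  have hAdisj : Pairwise (AEDisjoint μ on A) := fun i j hij =>
    (hAtom i).aedisjoint (hAtom j)
      (hdist _ (e i).2 _ (e j).2 fun h => hij (e.injective (Subtype.ext h)))
  have hc : 0 < l ^ k / 2 := by positivity
  have hmass : ∀ i, ∃ f : Lp ℝ p μ, ‖f‖ ≤ 1 ∧ l ^ k / 2 < ‖indicatorCLM μ p (A i) ((T ^ k) f)‖ :=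
    fun i => exists_norm_indicatorCLM_pow_apply_gt hT (hAtom i).1.measurableSet (by omega)
      ((half_lt_self (pow_pos hl k)).trans_le
        (pow_le_norm_pow_of_le_specRadius hl.le (hR _ (e i).2).2 (by omega)))
  choose f hf1 hfc using hmass
  obtain ⟨i, hi⟩ := ((tendsto_norm_indicatorCLM_apply_of_isCompactOperator hp' hcomp hf1
    (fun i => (hAtom i).1.measurableSet) hAdisj).eventually_lt_const hc).exists
  exact (hfc i).not_gt hi

theorem statement19 [SigmaFinite μ] (hμ : μ Set.univ ≠ 0) [Fact (1 ≤ p)]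
    (hp : 1 < p) (hp' : p ≠ ∞)
    (T : Lp ℝ p μ →L[ℝ] Lp ℝ p μ) (hT : IsPositiveOp T) (hpc : PowerCompact T)
    (l : ℝ) (hl : 0 < l) (R : Set (Set Ω))
    (hR : ∀ A ∈ R, Atom T A ∧ l ≤ rhoSet T A)
    (hdist : ∀ A ∈ R, ∀ B ∈ R, A ≠ B → ¬ (A =ᵐ[μ] B)) :
    R.Finite :=
  statement19_general hp' T hT hpc l hl R hR hdist

end PaperAtoms
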